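/- arXiv:1301.2157 — 3 statements merged into one kernel-verified Lean document; each statement's English description precedes it below -/
import Mathlib

section
/- Let n, m be natural numbers with m ≤ n + 1, and let ℓ₁, …, ℓ_m be nonzero linear forms in ℂ[X,Y] that are pairwise non-proportional. Then the binary forms ℓ₁ⁿ, …, ℓ_mⁿ (the n-th powers) are linearly independent over ℂ. -/
open MvPolynomial

/-- The linear form `a*X + b*Y` in `ℂ[X,Y]`. -/
noncomputable def lin (a b : ℂ) : MvPolynomial (Fin 2) ℂ :=
  MvPolynomial.C a * MvPolynomial.X 0 + MvPolynomial.C b * MvPolynomial.X 1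

/-- The partial derivative `∂_X` (for `i = 0`) or `∂_Y` (for `i = 1`) as a linear map. -/
noncomputable def pd (i : Fin 2) :
    MvPolynomial (Fin 2) ℂ →ₗ[ℂ] MvPolynomial (Fin 2) ℂ :=
  (MvPolynomial.pderiv i).toLinearMap

/-- The apolarity operator `q(∂) = Σ q_{ij} ∂_X^i ∂_Y^j`, as a linear map on `ℂ[X,Y]`. -/
noncomputable def apolarL (q : MvPolynomial (Fin 2) ℂ) :
    MvPolynomial (Fin 2) ℂ →ₗ[ℂ] MvPolynomial (Fin 2) ℂ :=
  q.support.sum fun m => q.coeff m • (pd 0 ^ m 0 * pd 1 ^ m 1)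

/-- The apolarity pairing `⟨q, p⟩`: the value of the constant polynomial `q(∂)p`. -/
noncomputable def pairing (q p : MvPolynomial (Fin 2) ℂ) : ℂ :=
  MvPolynomial.coeff 0 (apolarL q p)

/-!
The derivation `D = b ∂_X - a ∂_Y` kills `ℓ = aX + bY` and sends `ℓ'^(k+1)`, for `ℓ' = a'X + b'Y`,
to `(k+1)(a'b - ab') ℓ'^k`, a nonzero multiple of `ℓ'^k` exactly when `ℓ'` is not proportional to
`ℓ`. Applying `D` for the last form to a linear relation among the `n`-th powers therefore gives a
relation among the `(n-1)`-th powers of the other forms, so induction on the number of forms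
applies; the count `m ≤ n + 1` is what keeps the induction going down to degree `0`.
-/

theorem LinearIndependent.of_map_comp_castSucc {K M N : Type*} [DivisionRing K]
    [AddCommGroup M] [Module K M] [AddCommGroup N] [Module K N] {m : ℕ} {v : Fin (m + 1) → M}
    (f : M →ₗ[K] N) (hf : f (v (Fin.last m)) = 0) (hv : v (Fin.last m) ≠ 0)
    (hli : LinearIndependent K (f ∘ v ∘ Fin.castSucc)) : LinearIndependent K v := by
  rw [Fintype.linearIndependent_iff] at hli ⊢
  intro g hg
  rw [Fin.sum_univ_castSucc] at hg
  have hinit : ∀ i, g (Fin.castSucc i) = 0 := hli (g ∘ Fin.castSucc) <| by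
    simpa [hf] using congrArg f hg
  have hlast : g (Fin.last m) = 0 := by
    simpa [hinit, hv] using hg
  exact Fin.lastCases hlast hinit

theorem lin_smul (c a b : ℂ) : c • lin a b = lin (c * a) (c * b) := by
  simp only [lin, smul_eq_C_mul, map_mul]
  ring

theorem lin_ne_zero {a b : ℂ} (h : (a, b) ≠ (0, 0)) : lin a b ≠ 0 := by
  intro h0
  have hX := congrArg (eval ![1, 0]) h0
  have hY := congrArg (eval ![0, 1]) h0
  simp only [lin, map_add, map_mul, eval_C, eval_X, map_zero] at hX hY
  simp_all

theorem exists_lin_eq_smul_of_mul_sub_mul_eq_zero {a b a' b' : ℂ} (h' : (a', b') ≠ (0, 0))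
    (h : a * b' - a' * b = 0) : ∃ c : ℂ, lin a b = c • lin a' b' := by
  simp_rw [lin_smul]
  by_cases ha' : a' = 0
  · have hb' : b' ≠ 0 := fun hb' => h' (by rw [ha', hb'])
    refine ⟨b / b', ?_⟩
    congr 1 <;> field_simp
    linear_combination h
  · refine ⟨a / a', ?_⟩
    congr 1 <;> field_simp
    linear_combination -h

noncomputable def wedgeDeriv (a b : ℂ) :
    Derivation ℂ (MvPolynomial (Fin 2) ℂ) (MvPolynomial (Fin 2) ℂ) :=
  b • pderiv 0 - a • pderiv 1

theorem wedgeDeriv_lin (a' b' a b : ℂ) : wedgeDeriv a' b' (lin a b) = C (a * b' - a' * b) := by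
  simp only [wedgeDeriv, lin, Derivation.coe_sub, Derivation.coe_smul, Pi.sub_apply,
    Pi.smul_apply, map_add, pderiv_C_mul, pderiv_X_self, pderiv_X_of_ne zero_ne_one,
    pderiv_X_of_ne one_ne_zero, smul_eq_C_mul, map_sub, map_mul]
  ring

theorem wedgeDeriv_lin_pow (a' b' a b : ℂ) (k : ℕ) :
    wedgeDeriv a' b' (lin a b ^ (k + 1)) = ((k + 1) * (a * b' - a' * b)) • lin a b ^ k := by
  rw [Derivation.leibniz_pow, wedgeDeriv_lin, add_tsub_cancel_right, smul_eq_mul, nsmul_eq_mul,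
    smul_eq_C_mul]
  simp only [map_mul, map_add, map_natCast, map_one, Nat.cast_add, Nat.cast_one]
  ring

theorem linearIndependent_lin_pow {m n : ℕ} (hm : m ≤ n + 1) {a b : Fin m → ℂ}
    (hne : ∀ i, (a i, b i) ≠ (0, 0)) (hdet : Pairwise fun i j => a i * b j - a j * b i ≠ 0) :
    LinearIndependent ℂ fun i => lin (a i) (b i) ^ n := by
  induction m generalizing n with
  | zero => exact linearIndependent_empty_type
  | succ m ih =>
    cases n with
    | zero =>
      obtain rfl : m = 0 := by omega
      simp
    | succ k =>
      let D := (wedgeDeriv (a (Fin.last m)) (b (Fin.last m))).toLinearMap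
      have hdet_last (i : Fin m) :
          a i.castSucc * b (Fin.last m) - a (Fin.last m) * b i.castSucc ≠ 0 :=
        hdet (Fin.castSucc_lt_last i).ne
      have hinit := ih (n := k) (a := a ∘ Fin.castSucc) (b := b ∘ Fin.castSucc) (by omega)
        (fun i => hne _) fun _ _ hij => hdet ((Fin.castSucc_injective m).ne hij)
      have hli : LinearIndependent ℂ (D ∘ (fun i => lin (a i) (b i) ^ (k + 1)) ∘ Fin.castSucc) := by
        convert hinit.units_smul fun i =>
          Units.mk0 _ (mul_ne_zero (Nat.cast_add_one_ne_zero k) (hdet_last i)) using 1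
        funext i
        simp only [D, Function.comp_apply, Derivation.coeFn_coe, wedgeDeriv_lin_pow,
          Pi.smul_apply', Units.smul_def, Units.val_mk0]
      refine hli.of_map_comp_castSucc D ?_ (pow_ne_zero _ (lin_ne_zero (hne _)))
      simp only [D, Derivation.coeFn_coe, wedgeDeriv_lin_pow, sub_self, mul_zero, zero_smul]

/-- Powers of pairwise non-proportional nonzero linear forms are linearly independent
when their number is at most n + 1. -/
theorem powers_of_linear_forms_linearIndependent
    (n m : ℕ) (hm : m ≤ n + 1) (a b : Fin m → ℂ)
    (hne : ∀ i, (a i, b i) ≠ (0, 0))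
    (hprop : ∀ i j, i ≠ j → ∀ c : ℂ, lin (a i) (b i) ≠ c • lin (a j) (b j)) :
    LinearIndependent ℂ (fun i : Fin m => lin (a i) (b i) ^ n) := by
  refine linearIndependent_lin_pow hm hne fun i j hij hdet => ?_
  obtain ⟨c, hc⟩ := exists_lin_eq_smul_of_mul_sub_mul_eq_zero (hne j) hdet
  exact hprop i j hij c hc
end

section
/- Let n ≥ k be natural numbers and let q be a nonzero binary form of degree k over ℂ. Then the ℂ-linear map p ↦ q(∂)p from the space of binary forms of degree n to the space of binary forms of degree n − k is surjective; consequently its kernel is a ℂ-subspace of dimension exactly k. -/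
open MvPolynomial

/-!
The apolarity pairing `⟨u, v⟩ = (u(∂) v)(0)` equals `∑ₑ e₀! e₁! uₑ vₑ`, so `⟨u, ū⟩ > 0` for
`u ≠ 0`, where `ū` conjugates the coefficients. Since `(ab)(∂) = a(∂) b(∂)`, if `q(∂)(q̄ r) = 0`
then `u = r̄ q` satisfies `⟨u, ū⟩ = (r̄(∂) q(∂)(q̄ r))(0) = 0`, so `r = 0`. Thus `r ↦ q(∂)(q̄ r)`
is an injective, hence bijective, endomorphism of the forms of degree `n - k`, which gives
surjectivity; rank–nullity then gives a kernel of dimension `(n + 1) - (n - k + 1) = k`.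
-/

open Module

namespace MvPolynomial

section Dimension

variable {σ K : Type*} [Fintype σ] [CommRing K]

lemma setOf_degree_eq_eq_finsuppAntidiag [DecidableEq σ] (m : ℕ) :
    {d : σ →₀ ℕ | d.degree = m} = ↑(Finset.univ.finsuppAntidiag m : Finset (σ →₀ ℕ)) := by
  ext d
  simp [Finsupp.degree_eq_sum]

instance (m : ℕ) : Module.Finite K (homogeneousSubmodule σ K m) := by
  classical
  rw [homogeneousSubmodule_eq_finsupp_supported, setOf_degree_eq_eq_finsuppAntidiag]
  exact Module.Finite.of_basis (basisRestrictSupport K _)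

lemma finrank_homogeneousSubmodule [Nontrivial K] (m : ℕ) :
    finrank K (homogeneousSubmodule σ K m) = (Fintype.card σ + m - 1).choose m := by
  classical
  rw [homogeneousSubmodule_eq_finsupp_supported, setOf_degree_eq_eq_finsuppAntidiag,
    ← Finset.card_univ, ← Finset.card_finsuppAntidiag_nat_eq_choose]
  exact (finrank_eq_card_basis (basisRestrictSupport K _)).trans (Fintype.card_coe _)

lemma finrank_homogeneousSubmodule_fin_two [Nontrivial K] (m : ℕ) :
    finrank K (homogeneousSubmodule (Fin 2) K m) = m + 1 := by
  rw [finrank_homogeneousSubmodule, Fintype.card_fin, show 2 + m - 1 = m + 1 by omega,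
    Nat.choose_succ_self_right]

end Dimension

variable {σ R : Type*}

lemma pderiv_comm [CommRing R] (i j : σ) (p : MvPolynomial σ R) :
    pderiv i (pderiv j p) = pderiv j (pderiv i p) := by
  have h : ⁅pderiv i, pderiv j⁆ = (0 : Derivation R (MvPolynomial σ R) (MvPolynomial σ R)) :=
    derivation_ext fun l => by
      classical
      rw [Derivation.commutator_apply, pderiv_X, pderiv_X]
      simp [Pi.single_apply, apply_ite (pderiv _)]
  simpa [Derivation.commutator_apply, sub_eq_zero] using congr($h p)

lemma pderiv_iterate_monomial [CommSemiring R] (i : σ) (a : ℕ) (d : σ →₀ ℕ) (c : R) :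
    (pderiv i)^[a] (monomial d c) =
      monomial (d - Finsupp.single i a) ((d i).descFactorial a * c) := by
  classical
  induction a with
  | zero => simp
  | succ a ih =>
    rw [Function.iterate_succ_apply', ih, pderiv_monomial, Finsupp.tsub_apply,
      Finsupp.single_eq_same, tsub_tsub, ← Finsupp.single_add, Nat.descFactorial_succ]
    congr 1
    push_cast
    ring

lemma IsHomogeneous.pderiv_iterate [CommSemiring R] {p : MvPolynomial σ R} {n : ℕ}
    (hp : p.IsHomogeneous n) (i : σ) (a : ℕ) : ((pderiv i)^[a] p).IsHomogeneous (n - a) := by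
  induction a with
  | zero => exact hp
  | succ a ih =>
    rw [Function.iterate_succ_apply', Nat.sub_succ']
    exact ih.pderiv

lemma map_starRingEnd_map_starRingEnd [CommSemiring R] [StarRing R] (p : MvPolynomial σ R) :
    map (starRingEnd R) (map (starRingEnd R) p) = p := by
  ext e
  simp [coeff_map]

end MvPolynomial

lemma Submodule.finrank_map_add_finrank_inf_ker {K V W : Type*} [DivisionRing K]
    [AddCommGroup V] [Module K V] [AddCommGroup W] [Module K W] (f : V →ₗ[K] W)
    (P : Submodule K V) [FiniteDimensional K P] :
    finrank K (P.map f) + finrank K ↥(P ⊓ LinearMap.ker f) = finrank K P := by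
  rw [← LinearMap.range_domRestrict, ← (f.domRestrict P).finrank_range_add_finrank_ker,
    LinearMap.ker_domRestrict, ← (Submodule.comapSubtypeEquivOfLe inf_le_left).finrank_eq,
    Submodule.comap_inf, Submodule.comap_subtype_self, top_inf_eq]

noncomputable def pdPow (e : Fin 2 →₀ ℕ) : Module.End ℂ (MvPolynomial (Fin 2) ℂ) :=
  pd 0 ^ e 0 * pd 1 ^ e 1

lemma pd_pow_apply (i : Fin 2) (a : ℕ) (p : MvPolynomial (Fin 2) ℂ) :
    (pd i ^ a) p = (pderiv i)^[a] p :=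
  Module.End.pow_apply _ _ _

lemma commute_pd (i j : Fin 2) : Commute (pd i) (pd j) :=
  LinearMap.ext (pderiv_comm i j)

lemma pdPow_add (e d : Fin 2 →₀ ℕ) : pdPow (e + d) = pdPow e * pdPow d := by
  simp only [pdPow, Finsupp.add_apply, pow_add, mul_assoc]
  rw [← mul_assoc (pd 1 ^ e 1), ((commute_pd 1 0).pow_pow (e 1) (d 0)).eq, mul_assoc]

lemma pdPow_monomial (e d : Fin 2 →₀ ℕ) (c : ℂ) :
    pdPow e (monomial d c) =
      monomial (d - e) ((d 0).descFactorial (e 0) * (d 1).descFactorial (e 1) * c) := by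
  have hexp : d - Finsupp.single 1 (e 1) - Finsupp.single 0 (e 0) = d - e := by
    ext j
    fin_cases j <;> simp
  simp only [pdPow, Module.End.mul_apply, pd_pow_apply, pderiv_iterate_monomial, hexp]
  congr 1
  simp only [Finsupp.tsub_apply, Finsupp.single_apply, Fin.isValue, one_ne_zero, if_false,
    tsub_zero]
  ring

lemma MvPolynomial.IsHomogeneous.pdPow {p : MvPolynomial (Fin 2) ℂ} {n : ℕ}
    (hp : p.IsHomogeneous n) (e : Fin 2 →₀ ℕ) : (pdPow e p).IsHomogeneous (n - e.degree) := by
  have := (hp.pderiv_iterate 1 (e 1)).pderiv_iterate 0 (e 0)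
  simp only [_root_.pdPow, Module.End.mul_apply, pd_pow_apply]
  rwa [Nat.sub_sub, add_comm, ← Fin.sum_univ_two (f := fun i => e i),
    ← Finsupp.degree_eq_sum] at this

lemma apolarL_eq_sum (q : MvPolynomial (Fin 2) ℂ) :
    apolarL q = ∑ e ∈ q.support, q.coeff e • pdPow e :=
  rfl

lemma apolarL_eq_linearCombination (q : MvPolynomial (Fin 2) ℂ) :
    apolarL q = Finsupp.linearCombination ℂ pdPow (AddMonoidAlgebra.coeff q) :=
  rfl

lemma apolarL_add (a b : MvPolynomial (Fin 2) ℂ) : apolarL (a + b) = apolarL a + apolarL b := by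
  simp only [apolarL_eq_linearCombination]
  exact map_add _ (AddMonoidAlgebra.coeff a) (AddMonoidAlgebra.coeff b)

lemma apolarL_monomial (e : Fin 2 →₀ ℕ) (c : ℂ) : apolarL (monomial e c) = c • pdPow e := by
  rw [apolarL_eq_linearCombination, ← single_eq_monomial]
  exact Finsupp.linearCombination_single ..

lemma apolarL_mul (a b : MvPolynomial (Fin 2) ℂ) : apolarL (a * b) = apolarL a * apolarL b := by
  induction a using MvPolynomial.induction_on' with
  | add p q hp hq => rw [add_mul, apolarL_add, apolarL_add, hp, hq, add_mul]
  | monomial e c =>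
    induction b using MvPolynomial.induction_on' with
    | add p q hp hq => rw [mul_add, apolarL_add, apolarL_add, hp, hq, mul_add]
    | monomial d c' =>
      rw [monomial_mul, apolarL_monomial, apolarL_monomial, apolarL_monomial, pdPow_add,
        smul_mul_smul_comm]

lemma MvPolynomial.IsHomogeneous.apolarL {q p : MvPolynomial (Fin 2) ℂ} {k n : ℕ}
    (hq : q.IsHomogeneous k) (hp : p.IsHomogeneous n) :
    (apolarL q p).IsHomogeneous (n - k) := by
  rw [apolarL_eq_sum, LinearMap.sum_apply]
  refine IsHomogeneous.sum _ _ _ fun e he => ?_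
  have hek : e.degree = k := by
    rw [Finsupp.degree_eq_weight_one]
    exact hq (mem_support_iff.mp he)
  rw [LinearMap.smul_apply, smul_eq_C_mul, ← hek]
  exact (hp.pdPow e).C_mul _

lemma coeff_zero_pdPow (e : Fin 2 →₀ ℕ) (v : MvPolynomial (Fin 2) ℂ) :
    coeff 0 (pdPow e v) = (e 0).factorial * (e 1).factorial * coeff e v := by
  induction v using MvPolynomial.induction_on' with
  | monomial d c =>
    rw [pdPow_monomial, coeff_monomial, coeff_monomial]
    by_cases hde : d = e
    · subst hde
      simp [Nat.descFactorial_self]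
    · rw [if_neg hde, mul_zero, ite_eq_right_iff, tsub_eq_zero_iff_le]
      intro hle
      have hlt : d 0 < e 0 ∨ d 1 < e 1 := by
        by_contra! hge
        exact hde (le_antisymm hle (fun j => by fin_cases j <;> simp [hge.1, hge.2]))
      rcases hlt with h | h <;> simp [Nat.descFactorial_eq_zero_iff_lt.mpr h]
  | add p q hp hq => rw [map_add, coeff_add, hp, hq, coeff_add, mul_add]

lemma pairing_eq_sum (u v : MvPolynomial (Fin 2) ℂ) :
    pairing u v = ∑ e ∈ u.support, (e 0).factorial * (e 1).factorial * coeff e u * coeff e v := by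
  simp only [pairing, apolarL_eq_sum, LinearMap.sum_apply, LinearMap.smul_apply, coeff_sum,
    coeff_smul, smul_eq_mul, coeff_zero_pdPow]
  exact Finset.sum_congr rfl fun e _ => by ring

lemma eq_zero_of_pairing_map_conj_self_eq_zero {u : MvPolynomial (Fin 2) ℂ}
    (h : pairing u (map (starRingEnd ℂ) u) = 0) : u = 0 := by
  have hsum : pairing u (map (starRingEnd ℂ) u) =
      ↑(∑ e ∈ u.support, ((e 0).factorial * (e 1).factorial : ℝ) * Complex.normSq (coeff e u)) := by
    rw [pairing_eq_sum]
    push_cast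
    refine Finset.sum_congr rfl fun e _ => ?_
    rw [coeff_map, mul_assoc _ (coeff e u), Complex.mul_conj]
  rw [hsum, Complex.ofReal_eq_zero, Finset.sum_eq_zero_iff_of_nonneg
    fun e _ => mul_nonneg (by positivity) (Complex.normSq_nonneg _)] at h
  ext e
  rw [coeff_zero]
  by_contra he
  simpa [Nat.factorial_ne_zero, he] using h e (mem_support_iff.mpr he)

lemma eq_zero_of_apolarL_map_conj_mul_eq_zero {q r : MvPolynomial (Fin 2) ℂ} (hq0 : q ≠ 0)
    (h : apolarL q (map (starRingEnd ℂ) q * r) = 0) : r = 0 := by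
  set u := map (starRingEnd ℂ) r * q
  have hu : map (starRingEnd ℂ) u = map (starRingEnd ℂ) q * r := by
    rw [map_mul, map_starRingEnd_map_starRingEnd, mul_comm]
  have hpair : pairing u (map (starRingEnd ℂ) u) = 0 := by
    rw [pairing, hu, apolarL_mul, Module.End.mul_apply, h, map_zero, coeff_zero]
  obtain hr | hq := mul_eq_zero.mp (eq_zero_of_pairing_map_conj_self_eq_zero hpair)
  · rw [← map_starRingEnd_map_starRingEnd r, hr, map_zero]
  · exact absurd hq hq0

lemma exists_isHomogeneous_apolarL_map_conj_mul_eq {q r : MvPolynomial (Fin 2) ℂ} {k m : ℕ}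
    (hq : q.IsHomogeneous k) (hq0 : q ≠ 0) (hr : r.IsHomogeneous m) :
    ∃ s : MvPolynomial (Fin 2) ℂ, s.IsHomogeneous m ∧
      apolarL q (map (starRingEnd ℂ) q * s) = r := by
  let T : Module.End ℂ (homogeneousSubmodule (Fin 2) ℂ m) :=
    (apolarL q ∘ₗ LinearMap.mulLeft ℂ (map (starRingEnd ℂ) q)).restrict fun s hs => by
      have := hq.apolarL ((hq.map (starRingEnd ℂ)).mul hs)
      rwa [Nat.add_sub_cancel_left] at this
  have hT : Function.Injective T := by
    rw [← LinearMap.ker_eq_bot, Submodule.eq_bot_iff]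
    rintro ⟨s, hs⟩ hTs
    exact Subtype.ext (eq_zero_of_apolarL_map_conj_mul_eq_zero hq0 (congrArg Subtype.val hTs))
  obtain ⟨s, hs⟩ := LinearMap.injective_iff_surjective.mp hT ⟨r, hr⟩
  exact ⟨s, s.2, congrArg Subtype.val hs⟩

/-- For a nonzero binary form q of degree k ≤ n, the map p ↦ q(∂)p from degree-n
forms to degree-(n-k) forms is surjective, and its kernel has dimension k. -/
theorem apolar_surjective_kernel_dim
    (n k : ℕ) (hkn : k ≤ n) (q : MvPolynomial (Fin 2) ℂ)
    (hq : q.IsHomogeneous k) (hq0 : q ≠ 0) :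
    (∀ r : MvPolynomial (Fin 2) ℂ, r.IsHomogeneous (n - k) →
      ∃ p : MvPolynomial (Fin 2) ℂ, p.IsHomogeneous n ∧ apolarL q p = r) ∧
    Module.finrank ℂ
      ↥(MvPolynomial.homogeneousSubmodule (Fin 2) ℂ n ⊓ LinearMap.ker (apolarL q)) = k := by
  have hsurj : ∀ r : MvPolynomial (Fin 2) ℂ, r.IsHomogeneous (n - k) →
      ∃ p : MvPolynomial (Fin 2) ℂ, p.IsHomogeneous n ∧ apolarL q p = r := by
    intro r hr
    obtain ⟨s, hs, rfl⟩ := exists_isHomogeneous_apolarL_map_conj_mul_eq hq hq0 hr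
    refine ⟨_, ?_, rfl⟩
    simpa [Nat.add_sub_cancel' hkn] using (hq.map (starRingEnd ℂ)).mul hs
  have himage : (homogeneousSubmodule (Fin 2) ℂ n).map (apolarL q) =
      homogeneousSubmodule (Fin 2) ℂ (n - k) :=
    le_antisymm (Submodule.map_le_iff_le_comap.mpr fun _ hp => hq.apolarL hp)
      fun r hr => hsurj r hr
  have hdim :=
    Submodule.finrank_map_add_finrank_inf_ker (apolarL q) (homogeneousSubmodule (Fin 2) ℂ n)
  rw [himage, finrank_homogeneousSubmodule_fin_two, finrank_homogeneousSubmodule_fin_two] at hdim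
  exact ⟨hsurj, by omega⟩
end

section
/- Let n ≥ k ≥ 1 be natural numbers, let ℓ = aX + bY be a nonzero linear form in ℂ[X,Y], and let m = cX + dY be a nonzero linear form non-proportional to ℓ. Then the kernel of the operator (b ∂_X − a ∂_Y)^k on the space of binary forms of degree n equals the ℂ-span of {ℓ^{n−j} m^j : 0 ≤ j ≤ k−1}, a subspace of dimension k. -/
open MvPolynomial

/-!
Substituting `X ↦ ℓ`, `Y ↦ m` is a degree-preserving algebra automorphism `E` of `ℂ[X,Y]`, since
`ℓ` and `m` are linearly independent. The derivation `D = b ∂_X - a ∂_Y` kills `ℓ` and sends `m`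
to the constant `bc - ad ≠ 0`, so `E⁻¹ D E = (bc - ad) ∂_Y` and `ker Dᵏ = E (ker ∂_Yᵏ)`. This
reduces the theorem to `ℓ = X`, `m = Y`. There `∂_Yᵏ` sends each monomial of `Y`-degree at least
`k` to a nonzero multiple of a distinct monomial and kills the others, so its kernel on forms of
degree `n` is spanned by the `X^(n-j) Y^j` with `j < k`.
-/
theorem AddMonoidAlgebra.supported_inter {R M : Type*} [Semiring R] (s t : Set M) :
    supported R R (s ∩ t) = supported R R s ⊓ supported R R t := by
  ext p
  simp only [Submodule.mem_inf, mem_supported, Set.subset_inter_iff]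

namespace MvPolynomial

section PartialDerivatives

variable {σ R : Type*} [CommSemiring R]

theorem coeff_iterate_pderiv (i : σ) (k : ℕ) (p : MvPolynomial σ R) (m : σ →₀ ℕ) :
    coeff m ((pderiv i)^[k] p) =
      coeff (m + Finsupp.single i k) p * ((m i + 1).ascFactorial k : ℕ) := by
  classical
  induction k generalizing p with
  | zero => simp
  | succ k ih =>
    rw [Function.iterate_succ_apply, ih, coeff_pderiv, add_assoc, ← Finsupp.single_add,
      mul_assoc, Nat.ascFactorial_succ]
    simp only [Finsupp.add_apply, Finsupp.single_eq_same]
    push_cast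
    ring

variable [NoZeroDivisors R] [CharZero R]

theorem iterate_pderiv_eq_zero_iff (i : σ) (k : ℕ) (p : MvPolynomial σ R) :
    (pderiv i)^[k] p = 0 ↔ ∀ m : σ →₀ ℕ, k ≤ m i → coeff m p = 0 := by
  classical
  have hfac (m : σ →₀ ℕ) : (((m i + 1).ascFactorial k : ℕ) : R) ≠ 0 :=
    Nat.cast_ne_zero.mpr (Nat.ascFactorial_pos _ _).ne'
  constructor
  · intro h m hm
    have := coeff_iterate_pderiv i k p (m - Finsupp.single i k)
    rwa [h, coeff_zero, tsub_add_cancel_of_le (Finsupp.single_le_iff.mpr hm), eq_comm,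
      mul_eq_zero, or_iff_left (hfac _)] at this
  · intro h
    ext m
    rw [coeff_iterate_pderiv, h _ (by simp), zero_mul, coeff_zero]

theorem ker_pderiv_pow (i : σ) (k : ℕ) :
    LinearMap.ker ((pderiv i).toLinearMap ^ k) =
      AddMonoidAlgebra.supported R R {m : σ →₀ ℕ | m i < k} := by
  ext p
  rw [LinearMap.mem_ker, Module.End.pow_apply, AddMonoidAlgebra.mem_supported']
  simp only [Set.mem_ofPred_eq, not_lt]
  exact iterate_pderiv_eq_zero_iff i k p

theorem homogeneousSubmodule_inf_ker_pderiv_pow (n k : ℕ) (i : σ) :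
    homogeneousSubmodule σ R n ⊓ LinearMap.ker ((pderiv i).toLinearMap ^ k) =
      Submodule.span R ((monomial · 1) '' {m : σ →₀ ℕ | m.degree = n ∧ m i < k}) := by
  rw [homogeneousSubmodule_eq_finsupp_supported, ker_pderiv_pow,
    ← AddMonoidAlgebra.supported_inter, AddMonoidAlgebra.supported_eq_span_single]
  rfl

end PartialDerivatives

section BinaryForms

variable {R : Type*} [CommSemiring R]

theorem setOf_degree_eq_and_lt_fin_two {n k : ℕ} (hkn : k ≤ n + 1) :
    {m : Fin 2 →₀ ℕ | m.degree = n ∧ m 1 < k} =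
      Set.range fun j : Fin k => Finsupp.single 0 (n - j) + Finsupp.single 1 (j : ℕ) := by
  ext m
  simp only [Set.mem_ofPred_eq, Set.mem_range, Finsupp.degree_eq_sum, Fin.sum_univ_two]
  constructor
  · rintro ⟨hdeg, hlt⟩
    refine ⟨⟨m 1, hlt⟩, ?_⟩
    ext i
    fin_cases i <;> simp [← hdeg]
  · rintro ⟨j, rfl⟩
    have hj : (j : ℕ) ≤ n := by omega
    simp [Nat.sub_add_cancel hj]

theorem X_pow_mul_X_pow_eq_monomial (a b : ℕ) :
    (X 0 : MvPolynomial (Fin 2) R) ^ a * X 1 ^ b =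
      monomial (Finsupp.single 0 a + Finsupp.single 1 b) 1 := by
  simp [X_pow_eq_monomial, monomial_mul]

theorem linearIndependent_X_pow_mul_X_pow (n : ℕ) :
    LinearIndependent R fun j : ℕ => (X 0 : MvPolynomial (Fin 2) R) ^ (n - j) * X 1 ^ j := by
  simp only [X_pow_mul_X_pow_eq_monomial]
  refine (basisMonomials (Fin 2) R).linearIndependent.comp _ fun i j hij => ?_
  simpa using congrArg (· 1) hij

theorem homogeneousSubmodule_inf_ker_pderiv_one_pow [NoZeroDivisors R] [CharZero R]
    {n k : ℕ} (hkn : k ≤ n + 1) :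
    homogeneousSubmodule (Fin 2) R n ⊓ LinearMap.ker ((pderiv 1).toLinearMap ^ k) =
      Submodule.span R
        (Set.range fun j : Fin k => (X 0 : MvPolynomial (Fin 2) R) ^ (n - j) * X 1 ^ (j : ℕ)) := by
  rw [homogeneousSubmodule_inf_ker_pderiv_pow, setOf_degree_eq_and_lt_fin_two hkn,
    ← Set.range_comp]
  simp only [Function.comp_def, X_pow_mul_X_pow_eq_monomial]

end BinaryForms

section LinearSubstitution

variable {σ R : Type*} [CommSemiring R] [Fintype σ]

theorem bind₁_toMvPolynomial_comp (M N : Matrix σ σ R) :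
    (bind₁ M.toMvPolynomial).comp (bind₁ N.toMvPolynomial) = bind₁ (N * M).toMvPolynomial := by
  rw [bind₁_comp_bind₁]
  congr 1
  funext i
  rw [Matrix.toMvPolynomial_mul]

variable [DecidableEq σ]

/-- The substitution `X i ↦ ∑ j, M i j • X j`. -/
noncomputable def linearSubst (M : (Matrix σ σ R)ˣ) :
    MvPolynomial σ R ≃ₐ[R] MvPolynomial σ R :=
  AlgEquiv.ofAlgHom (bind₁ (M : Matrix σ σ R).toMvPolynomial)
    (bind₁ (↑M⁻¹ : Matrix σ σ R).toMvPolynomial)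
    (by rw [bind₁_toMvPolynomial_comp, M.inv_mul, Matrix.toMvPolynomial_one, bind₁_X_left])
    (by rw [bind₁_toMvPolynomial_comp, M.mul_inv, Matrix.toMvPolynomial_one, bind₁_X_left])

theorem linearSubst_apply (M : (Matrix σ σ R)ˣ) (p : MvPolynomial σ R) :
    linearSubst M p = bind₁ (M : Matrix σ σ R).toMvPolynomial p := rfl

@[simp]
theorem linearSubst_X (M : (Matrix σ σ R)ˣ) (i : σ) :
    linearSubst M (X i) = (M : Matrix σ σ R).toMvPolynomial i :=
  bind₁_X_right _ _

@[simp]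
theorem linearSubst_C (M : (Matrix σ σ R)ˣ) (r : R) : linearSubst M (C r) = C r :=
  (linearSubst M).commutes r

@[simp]
theorem linearSubst_symm (M : (Matrix σ σ R)ˣ) : (linearSubst M).symm = linearSubst M⁻¹ := rfl

theorem IsHomogeneous.linearSubst {n : ℕ} {p : MvPolynomial σ R} (hp : p.IsHomogeneous n)
    (M : (Matrix σ σ R)ˣ) : (linearSubst M p).IsHomogeneous n := by
  simpa [linearSubst_apply] using
    hp.aeval _ (Matrix.toMvPolynomial_isHomogeneous (M : Matrix σ σ R))

theorem map_linearSubst_homogeneousSubmodule (M : (Matrix σ σ R)ˣ) (n : ℕ) :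
    (homogeneousSubmodule σ R n).map (linearSubst M).toLinearMap = homogeneousSubmodule σ R n := by
  refine le_antisymm ?_ fun p hp => ⟨linearSubst M⁻¹ p, hp.linearSubst _, ?_⟩
  · rintro _ ⟨p, hp, rfl⟩
    exact hp.linearSubst M
  · rw [← linearSubst_symm]
    exact (linearSubst M).apply_symm_apply p

end LinearSubstitution

end MvPolynomial

namespace Derivation

variable {R A : Type*} [CommSemiring R] [CommRing A] [Algebra R A]

noncomputable def conj (e : A ≃ₐ[R] A) (D : Derivation R A A) : Derivation R A A :=
  Derivation.mk' (e.toLinearEquiv.conjAlgEquiv R D.toLinearMap) fun x y => by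
    simp [LinearEquiv.conjAlgEquiv_apply, Derivation.leibniz, smul_eq_mul]

@[simp]
theorem conj_apply (e : A ≃ₐ[R] A) (D : Derivation R A A) (x : A) :
    D.conj e x = e (D (e.symm x)) := rfl

theorem toLinearMap_conj (e : A ≃ₐ[R] A) (D : Derivation R A A) :
    (D.conj e).toLinearMap = e.toLinearEquiv.conjAlgEquiv R D.toLinearMap := rfl

end Derivation

theorem LinearEquiv.ker_conjAlgEquiv {R M : Type*} [CommSemiring R] [AddCommMonoid M]
    [Module R M] (e : M ≃ₗ[R] M) (f : Module.End R M) :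
    LinearMap.ker (e.conjAlgEquiv R f) = (LinearMap.ker f).map (e : M →ₗ[R] M) := by
  ext x
  simp [LinearEquiv.conjAlgEquiv_apply, Submodule.mem_map_equiv]

namespace MvPolynomial

theorem toMvPolynomial_fin_two {R : Type*} [CommSemiring R] (M : Matrix (Fin 2) (Fin 2) R)
    (i : Fin 2) : M.toMvPolynomial i = C (M i 0) * X 0 + C (M i 1) * X 1 := by
  simp [Matrix.toMvPolynomial, Fin.sum_univ_two, C_mul_X_eq_monomial]

theorem conj_linearSubst_symm_smul_pderiv_sub {R : Type*} [CommRing R] (a b c d : R)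
    (h : IsUnit !![a, b; c, d]) :
    Derivation.conj (linearSubst h.unit).symm (b • pderiv 0 - a • pderiv 1) =
      (b * c - a * d) • pderiv 1 := by
  apply derivation_ext
  intro i
  fin_cases i <;> simp [toMvPolynomial_fin_two, pderiv_X, smul_eq_C_mul, mul_comm]

theorem ker_smul_pderiv_sub_pow {K : Type*} [Field K] (a b c d : K) (h : IsUnit !![a, b; c, d])
    (k : ℕ) :
    LinearMap.ker ((b • (pderiv (R := K) (0 : Fin 2)).toLinearMap -
        a • (pderiv (R := K) (1 : Fin 2)).toLinearMap) ^ k) =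
      (LinearMap.ker ((pderiv (R := K) (1 : Fin 2)).toLinearMap ^ k)).map
        (linearSubst h.unit).toLinearMap := by
  have hδ : b * c - a * d ≠ 0 := by
    have := ((Matrix.isUnit_iff_isUnit_det _).mp h).ne_zero
    rw [Matrix.det_fin_two_of] at this
    rwa [← neg_sub, neg_ne_zero]
  have hconj := congrArg Derivation.toLinearMap (conj_linearSubst_symm_smul_pderiv_sub a b c d h)
  rw [Derivation.toLinearMap_conj, AlgEquiv.toLinearEquiv_symm, ← LinearEquiv.symm_conjAlgEquiv,
    AlgEquiv.symm_apply_eq] at hconj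
  simp only [Derivation.coe_sub_linearMap, Derivation.coe_smul_linearMap] at hconj
  rw [hconj, ← map_pow, LinearEquiv.ker_conjAlgEquiv, smul_pow,
    LinearMap.ker_smul _ _ (pow_ne_zero _ hδ)]

theorem linearSubst_X_pow_mul_X_pow {R : Type*} [CommRing R] {a b c d : R}
    (h : IsUnit !![a, b; c, d]) (i j : ℕ) :
    linearSubst h.unit (X 0 ^ i * X 1 ^ j) =
      (C a * X 0 + C b * X 1) ^ i * (C c * X 0 + C d * X 1) ^ j := by
  simp [toMvPolynomial_fin_two]

end MvPolynomial

open MvPolynomial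

theorem smul_lin (t a b : ℂ) : t • lin a b = lin (t * a) (t * b) := by
  simp only [lin, smul_add, smul_eq_C_mul, C_mul, mul_assoc]

theorem det_ne_zero_of_not_proportional {a b c d : ℂ} (hl : (a, b) ≠ (0, 0))
    (hprop : ∀ t : ℂ, lin c d ≠ t • lin a b) : a * d - b * c ≠ 0 := by
  intro h
  by_cases ha : a = 0
  · have hb : b ≠ 0 := fun hb => hl (by rw [ha, hb])
    have hc : c = 0 := by simpa [ha, hb] using h
    exact hprop (d / b) (by rw [smul_lin, ha, hc, mul_zero, div_mul_cancel₀ _ hb])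
  · refine hprop (c / a) ?_
    rw [smul_lin, div_mul_cancel₀ _ ha, div_mul_eq_mul_div]
    congr 1
    rw [eq_div_iff ha]
    linear_combination h

theorem kernel_of_power_of_derivation_general
    (n k : ℕ) (hkn : k ≤ n) (a b c d : ℂ)
    (hl : (a, b) ≠ (0, 0))
    (hprop : ∀ t : ℂ, lin c d ≠ t • lin a b) :
    MvPolynomial.homogeneousSubmodule (Fin 2) ℂ n ⊓
        LinearMap.ker ((b • pd 0 - a • pd 1) ^ k) =
      Submodule.span ℂ
        (Set.range fun j : Fin k => lin a b ^ (n - (j : ℕ)) * lin c d ^ (j : ℕ)) ∧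
    Module.finrank ℂ
      ↥(Submodule.span ℂ
        (Set.range fun j : Fin k => lin a b ^ (n - (j : ℕ)) * lin c d ^ (j : ℕ))) = k := by
  have hM : IsUnit !![a, b; c, d] := by
    rw [Matrix.isUnit_iff_isUnit_det, Matrix.det_fin_two_of]
    exact (det_ne_zero_of_not_proportional hl hprop).isUnit
  set E := linearSubst hM.unit
  have hspan : Submodule.span ℂ
      (Set.range fun j : Fin k => lin a b ^ (n - (j : ℕ)) * lin c d ^ (j : ℕ)) =
        (Submodule.span ℂ (Set.range fun j : Fin k =>
          (X 0 : MvPolynomial (Fin 2) ℂ) ^ (n - (j : ℕ)) * X 1 ^ (j : ℕ))).map E.toLinearMap := by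
    rw [Submodule.map_span, ← Set.range_comp]
    congr 2
    funext j
    exact (linearSubst_X_pow_mul_X_pow hM _ _).symm
  have hli : LinearIndependent ℂ fun j : Fin k =>
      (X 0 : MvPolynomial (Fin 2) ℂ) ^ (n - (j : ℕ)) * X 1 ^ (j : ℕ) :=
    (linearIndependent_X_pow_mul_X_pow n).comp _ Fin.val_injective
  constructor
  · rw [pd, pd, ker_smul_pderiv_sub_pow a b c d hM,
      ← map_linearSubst_homogeneousSubmodule hM.unit n, ← Submodule.map_inf _ E.injective,
      homogeneousSubmodule_inf_ker_pderiv_one_pow (hkn.trans n.le_succ), hspan]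
  · rw [hspan, ← AlgEquiv.toLinearEquiv_toLinearMap, LinearEquiv.finrank_map_eq,
      finrank_span_eq_card hli, Fintype.card_fin]

/-- The kernel of (b ∂_X − a ∂_Y)^k on degree-n binary forms is spanned by
the forms ℓ^(n−j) * m^j for 0 ≤ j ≤ k − 1, a subspace of dimension k. -/
theorem kernel_of_power_of_derivation
    (n k : ℕ) (hk : 1 ≤ k) (hkn : k ≤ n) (a b c d : ℂ)
    (hl : (a, b) ≠ (0, 0)) (hm : (c, d) ≠ (0, 0))
    (hprop : ∀ t : ℂ, lin c d ≠ t • lin a b) :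
    MvPolynomial.homogeneousSubmodule (Fin 2) ℂ n ⊓
        LinearMap.ker ((b • pd 0 - a • pd 1) ^ k) =
      Submodule.span ℂ
        (Set.range fun j : Fin k => lin a b ^ (n - (j : ℕ)) * lin c d ^ (j : ℕ)) ∧
    Module.finrank ℂ
      ↥(Submodule.span ℂ
        (Set.range fun j : Fin k => lin a b ^ (n - (j : ℕ)) * lin c d ^ (j : ℕ))) = k :=
  kernel_of_power_of_derivation_general n k hkn a b c d hl hprop
end
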